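/- arXiv:1711.04796 — 3 statements merged into one kernel-verified Lean document; each statement's English description precedes it below -/
import Mathlib

section
/- Let S ⊂ R_{++} be a finite set and let g : (S ∪ {0,∞})^n → [0,1] be right-continuous, n-increasing, satisfy g(z)=0 whenever some coordinate of z is 0, and g(∞,...,∞)=1. Then there exists a function G : (R_{++} ∪ {0,∞})^n → [0,1] with the same four properties on the whole extended positive orthant such that g is the restriction of G to (S ∪ {0,∞})^n. Conversely, the restriction of any such G to (S ∪ {0,∞})^n has the four properties on that finite grid. -/
open MeasureTheory ENNReal
open scoped Classical

/-- Signed vertex sum of `g` over the `n`-box `[x,y]`: vertex `b` picks `y i`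
where `s i = true` and `x i` where `s i = false`; the sign is `+1` iff `b i = x i`
for an even number of coordinates. -/
noncomputable def boxSum (n : ℕ) (g : (Fin n → ℝ≥0∞) → ℝ) (x y : Fin n → ℝ≥0∞) : ℝ :=
  ∑ s : Fin n → Bool, (-1 : ℝ) ^ (Finset.univ.filter (fun i => s i = false)).card *
    g (fun i => if s i then y i else x i)

/-- `g` has the four CDF-like properties on the grid `D^n`:
values in `[0,1]`, right continuity (continuity within the upper set intersected
with the domain), `n`-increasingness, vanishing when a coordinate is `0`, and
value `1` at `(∞,…,∞)`. -/
def IsGridCDF (n : ℕ) (D : Set ℝ≥0∞) (g : (Fin n → ℝ≥0∞) → ℝ) : Prop :=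
  (∀ z : Fin n → ℝ≥0∞, (∀ i, z i ∈ D) → g z ∈ Set.Icc (0 : ℝ) 1) ∧
  (∀ z : Fin n → ℝ≥0∞, (∀ i, z i ∈ D) →
    ContinuousWithinAt g {w : Fin n → ℝ≥0∞ | (∀ i, w i ∈ D) ∧ ∀ i, z i ≤ w i} z) ∧
  (∀ x y : Fin n → ℝ≥0∞, (∀ i, x i ∈ D) → (∀ i, y i ∈ D) → (∀ i, x i ≤ y i) →
    0 ≤ boxSum n g x y) ∧
  (∀ z : Fin n → ℝ≥0∞, (∀ i, z i ∈ D) → (∃ i, z i = 0) → g z = 0) ∧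
  g (fun _ => ∞) = 1

/-! Replace every coordinate by the largest point of the grid `D = S ∪ {0, ∞}` below it. This
coordinatewise floor is monotone, fixes `D`, and (as `D` is finite) is locally constant to the
right, so composing `g` with it preserves the four properties: a box is sent to a box of the grid
with the same signed vertex sum. No cut-off point beyond `max S` is needed, since the grid already
contains `∞`. Restricting goes the other way trivially. -/

open Topology Filter

section GridFloor

variable {α : Type*} [CompleteLinearOrder α] (D : Set α)

noncomputable def gridFloor (t : α) : α :=
  sSup {x ∈ D | x ≤ t}

theorem gridFloor_mono : Monotone (gridFloor D) :=
  fun _ _ hts => sSup_le_sSup fun _ hx => ⟨hx.1, hx.2.trans hts⟩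

theorem gridFloor_of_mem {t : α} (ht : t ∈ D) : gridFloor D t = t :=
  IsGreatest.csSup_eq ⟨⟨ht, le_rfl⟩, fun _ hx => hx.2⟩

variable {D}

theorem gridFloor_mem (hD : D.Finite) (hbot : ⊥ ∈ D) (t : α) : gridFloor D t ∈ D := by
  have hne : {x ∈ D | x ≤ t}.Nonempty := ⟨⊥, hbot, bot_le⟩
  exact (hne.csSup_mem (hD.subset (Set.sep_subset _ _))).1

theorem eventually_le_iff_nhdsGE [TopologicalSpace α] [OrderTopology α] (x t : α) :
    ∀ᶠ w in 𝓝[≥] t, (x ≤ w ↔ x ≤ t) := by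
  by_cases hxt : x ≤ t
  · filter_upwards [self_mem_nhdsWithin] with w (htw : t ≤ w)
    exact iff_of_true (hxt.trans htw) hxt
  · filter_upwards [nhdsWithin_le_nhds (gt_mem_nhds (not_le.1 hxt))] with w hwx
    exact iff_of_false (not_le.2 hwx) hxt

theorem eventually_gridFloor_eq_nhdsGE [TopologicalSpace α] [OrderTopology α] (hD : D.Finite)
    (t : α) : ∀ᶠ w in 𝓝[≥] t, gridFloor D w = gridFloor D t := by
  filter_upwards [(hD.eventually_all).2 fun x _ => eventually_le_iff_nhdsGE x t] with w hw
  unfold gridFloor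
  congr 1
  ext x
  exact and_congr_right (hw x)

end GridFloor

theorem boxSum_congr_of_eqOn_grid {n : ℕ} {D : Set ℝ≥0∞} {g G : (Fin n → ℝ≥0∞) → ℝ}
    (hgG : ∀ z : Fin n → ℝ≥0∞, (∀ i, z i ∈ D) → g z = G z) {x y : Fin n → ℝ≥0∞}
    (hx : ∀ i, x i ∈ D) (hy : ∀ i, y i ∈ D) : boxSum n g x y = boxSum n G x y := by
  refine Finset.sum_congr rfl fun s _ => congrArg _ (hgG _ fun i => ?_)
  split_ifs
  exacts [hy i, hx i]

theorem boxSum_comp_map {n : ℕ} (g : (Fin n → ℝ≥0∞) → ℝ) (f : ℝ≥0∞ → ℝ≥0∞)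
    (x y : Fin n → ℝ≥0∞) :
    boxSum n (fun z => g (f ∘ z)) x y = boxSum n g (f ∘ x) (f ∘ y) := by
  refine Finset.sum_congr rfl fun s _ => congrArg _ (congrArg g (funext fun i => ?_))
  exact apply_ite f _ _ _

theorem IsGridCDF.of_eqOn {n : ℕ} {D E : Set ℝ≥0∞} {g G : (Fin n → ℝ≥0∞) → ℝ}
    (hG : IsGridCDF n E G) (hDE : D ⊆ E) (htop : ∞ ∈ D)
    (hgG : ∀ z : Fin n → ℝ≥0∞, (∀ i, z i ∈ D) → g z = G z) : IsGridCDF n D g := by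
  obtain ⟨hIcc, hcont, hbox, hzero, htop_eq⟩ := hG
  have hE : ∀ {z : Fin n → ℝ≥0∞}, (∀ i, z i ∈ D) → ∀ i, z i ∈ E := fun hz i => hDE (hz i)
  refine ⟨fun z hz => hgG z hz ▸ hIcc z (hE hz), fun z hz => ?_, fun x y hx hy hxy => ?_,
    fun z hz h0 => hgG z hz ▸ hzero z (hE hz) h0, hgG _ (fun _ => htop) ▸ htop_eq⟩
  · exact ((hcont z (hE hz)).mono fun w hw => ⟨hE hw.1, hw.2⟩).congr
      (fun w hw => hgG w hw.1) (hgG z hz)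
  · exact boxSum_congr_of_eqOn_grid hgG hx hy ▸ hbox x y (hE hx) (hE hy) hxy

theorem IsGridCDF.comp_retraction {n : ℕ} {D : Set ℝ≥0∞} {g : (Fin n → ℝ≥0∞) → ℝ}
    (hg : IsGridCDF n D g) {f : ℝ≥0∞ → ℝ≥0∞} (hmono : Monotone f) (hmem : ∀ t, f t ∈ D)
    (hfix : ∀ t ∈ D, f t = t) (hright : ∀ t, ∀ᶠ w in 𝓝[≥] t, f w = f t)
    (h0 : (0 : ℝ≥0∞) ∈ D) (htop : ∞ ∈ D) : IsGridCDF n Set.univ (fun z => g (f ∘ z)) := by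
  obtain ⟨hIcc, -, hbox, hzero, htop_eq⟩ := hg
  refine ⟨fun z _ => hIcc _ fun i => hmem _, fun z _ => ?_, fun x y _ _ hxy => ?_,
    fun z _ ⟨i, hi⟩ => hzero _ (fun i => hmem _) ⟨i, by simp [hi, hfix 0 h0]⟩, ?_⟩
  · have hcoord : ∀ᶠ w in 𝓝[{w | (∀ i, w i ∈ Set.univ) ∧ ∀ i, z i ≤ w i}] z, f ∘ w = f ∘ z := by
      simp only [funext_iff, Function.comp_apply, eventually_all]
      exact fun i => ((continuous_apply i).continuousWithinAt.tendsto_nhdsWithin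
        fun w hw => hw.2 i).eventually (hright (z i))
    exact continuousWithinAt_const.congr_of_eventuallyEq
      (hcoord.mono fun w hw => congrArg g hw) rfl
  · exact boxSum_comp_map g f x y ▸ hbox _ _ (fun i => hmem _) (fun i => hmem _)
      fun i => hmono (hxy i)
  · simpa [Function.comp_def, hfix ∞ htop] using htop_eq

theorem stmt3_general {n : ℕ} (S : Set ℝ≥0∞) (hfin : S.Finite)
    (g : (Fin n → ℝ≥0∞) → ℝ) :
    IsGridCDF n (S ∪ {0, ∞}) g ↔
      ∃ G : (Fin n → ℝ≥0∞) → ℝ, IsGridCDF n Set.univ G ∧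
        ∀ z : Fin n → ℝ≥0∞, (∀ i, z i ∈ S ∪ {0, ∞}) → g z = G z := by
  have hgrid : (S ∪ {0, ∞}).Finite := hfin.union (Set.toFinite _)
  have h0 : (0 : ℝ≥0∞) ∈ S ∪ {0, ∞} := by simp
  have htop : ∞ ∈ S ∪ {0, ∞} := by simp
  constructor
  · intro hg
    exact ⟨_, hg.comp_retraction (gridFloor_mono _) (gridFloor_mem hgrid h0)
      (fun _ => gridFloor_of_mem _) (eventually_gridFloor_eq_nhdsGE hgrid) h0 htop,
      fun z hz => congrArg g (funext fun i => (gridFloor_of_mem _ (hz i)).symm)⟩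
  · rintro ⟨G, hG, hgG⟩
    exact hG.of_eqOn (Set.subset_univ _) htop hgG

/-- for a finite `S ⊂ ℝ_{++}`, a function `g` on the grid
`(S ∪ {0,∞})^n` has the four CDF properties iff it is the restriction of a
function `G` having the four properties on the whole extended positive orthant. -/
theorem stmt3 {n : ℕ} (S : Set ℝ≥0∞) (hfin : S.Finite)
    (hS : ∀ s ∈ S, 0 < s ∧ s < ∞) (g : (Fin n → ℝ≥0∞) → ℝ) :
    IsGridCDF n (S ∪ {0, ∞}) g ↔
      ∃ G : (Fin n → ℝ≥0∞) → ℝ, IsGridCDF n Set.univ G ∧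
        ∀ z : Fin n → ℝ≥0∞, (∀ i, z i ∈ S ∪ {0, ∞}) → g z = G z :=
  stmt3_general S hfin g
end

section
/- Let S_k = {r_1, ..., r_{k−1}, 1, 1/r_{k−1}, ..., 1/r_1} with 0 < r_1 < ... < r_{k−1} < 1, and let F : R_{++} → [0,1] be a CDF that is piecewise defined on the intervals determined by S_k, satisfying F(x) + F(1/x) = 1 for all x not in S_k, and right-continuous. Define φ^F(x,y) = 1 + y − min{1, 1−1/x+y}F(x) − yF(y) + min{1+1/x, 1+y}·max{0, F(x)+F(y)−1}. Then sup_{x,y > 0} φ^F(x,y) = sup_{x,y > 0, xy ≥ 1} [ y − 1/x + (1 + 1/x − y)F(y) + (1/x)F(x) ]. -/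
/-!
If `xy ≥ 1` then `x⁻¹ ≤ y`, so `F x + F y ≥ F x + F x⁻¹ ≥ 1` (the last inequality by
right-continuity, approaching `x` from the right off the finite set `S`); the `max` term is
then active and `φ^F(x, y)` collapses to the simplified expression `ψ(x, y)`. If `xy < 1` and
`x, y ∉ S`, the symmetry `F z + F z⁻¹ = 1` turns `φ^F(x, y)` into `ψ(y⁻¹, x⁻¹)` with
`y⁻¹ x⁻¹ > 1`. The remaining points are limits from the upper right of such points, and `φ^F`
is right-continuous there because `F` is.
-/

open Set ENNReal Filter Topology

/-- `φ^F(x, y)` with `F x` and `F y` replaced by free variables `a` and `b`. -/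
noncomputable def phi (x y a b : ℝ) : ℝ :=
  1 + y - min 1 (1 - 1 / x + y) * a - y * b + min (1 + 1 / x) (1 + y) * max 0 (a + b - 1)

/-- The simplified expression `y − 1/x + (1 + 1/x − y)F(y) + (1/x)F(x)`, abstracted likewise. -/
noncomputable def psi (x y a b : ℝ) : ℝ :=
  y - 1 / x + (1 + 1 / x - y) * b + (1 / x) * a

lemma phi_eq_psi {x y a b : ℝ} (hx : 0 < x) (hxy : 1 ≤ x * y) (hab : 1 ≤ a + b) :
    phi x y a b = psi x y a b := by
  have hyx : 1 / x ≤ y := by rwa [div_le_iff₀' hx]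
  rw [phi, psi, min_eq_left (by linarith), min_eq_left (by linarith),
    max_eq_right (by linarith)]
  ring

lemma phi_eq_psi_inv {x y a b : ℝ} (hx : 0 < x) (hxy : x * y ≤ 1) (hab : a + b ≤ 1) :
    phi x y a b = psi y⁻¹ x⁻¹ (1 - b) (1 - a) := by
  have hyx : y ≤ 1 / x := by rwa [le_div_iff₀' hx]
  rw [phi, psi, min_eq_right (by linarith), min_eq_right (by linarith),
    max_eq_left (by linarith)]
  simp only [one_div, inv_inv]
  ring

lemma tendsto_phi {α : Type*} {l : Filter α} {fx fy fa fb : α → ℝ} {x y a b : ℝ}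
    (hx : Tendsto fx l (𝓝 x)) (hy : Tendsto fy l (𝓝 y)) (ha : Tendsto fa l (𝓝 a))
    (hb : Tendsto fb l (𝓝 b)) (hx0 : x ≠ 0) :
    Tendsto (fun t => phi (fx t) (fy t) (fa t) (fb t)) l (𝓝 (phi x y a b)) := by
  have hinv : Tendsto (fun t => 1 / fx t) l (𝓝 (1 / x)) := tendsto_const_nhds.div hx hx0
  unfold phi
  exact ((((tendsto_const_nhds.add hy).sub ((tendsto_const_nhds.min
    ((tendsto_const_nhds.sub hinv).add hy)).mul ha)).sub (hy.mul hb)).add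
    (((tendsto_const_nhds.add hinv).min (tendsto_const_nhds.add hy)).mul
    (tendsto_const_nhds.max ((ha.add hb).sub tendsto_const_nhds))))

lemma Finset.eventually_nhdsGT_notMem {α : Type*} [TopologicalSpace α] [Preorder α] [T1Space α]
    (S : Finset α) (x : α) : ∀ᶠ z in 𝓝[>] x, z ∉ S :=
  S.eventually_cofinite_notMem.filter_mono ((nhdsGT_le_nhdsNE x).trans (nhdsNE_le_cofinite x))

section

variable {S : Finset ℝ} {F : ℝ → ℝ}

lemma one_le_add_inv (hmono : MonotoneOn F (Ioi 0))
    (hrc : ∀ x > (0 : ℝ), ContinuousWithinAt F (Ici x) x)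
    (hsym : ∀ x > (0 : ℝ), x ∉ S → F x + F x⁻¹ = 1) {x : ℝ} (hx : 0 < x) :
    1 ≤ F x + F x⁻¹ := by
  have hF : Tendsto F (𝓝[>] x) (𝓝 (F x)) := ((hrc x hx).mono Ioi_subset_Ici_self).tendsto
  refine ge_of_tendsto (hF.add_const (F x⁻¹)) ?_
  filter_upwards [S.eventually_nhdsGT_notMem x, self_mem_nhdsWithin] with z hzS hxz
  have hz : 0 < z := hx.trans hxz
  have : F z⁻¹ ≤ F x⁻¹ := hmono (inv_pos.2 hz) (inv_pos.2 hx) (inv_anti₀ hx hxz.le)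
  linarith [hsym z hz hzS]

lemma phi_apply_eq_psi_inv (hmono : MonotoneOn F (Ioi 0))
    (hsym : ∀ x > (0 : ℝ), x ∉ S → F x + F x⁻¹ = 1) {x y : ℝ} (hx : 0 < x) (hy : 0 < y)
    (hxy : x * y ≤ 1) (hxS : x ∉ S) (hyS : y ∉ S) :
    phi x y (F x) (F y) = psi y⁻¹ x⁻¹ (F y⁻¹) (F x⁻¹) := by
  have hyx : y ≤ x⁻¹ := by rwa [← one_div, le_div_iff₀' hx]
  have hFyx : F y ≤ F x⁻¹ := hmono hy (inv_pos.2 hx) hyx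
  have hsx := hsym x hx hxS
  have hsy := hsym y hy hyS
  rw [phi_eq_psi_inv hx hxy (by linarith), show F y⁻¹ = 1 - F y by linarith,
    show F x⁻¹ = 1 - F x by linarith]

lemma phi_apply_eq_psi (hmono : MonotoneOn F (Ioi 0))
    (hrc : ∀ x > (0 : ℝ), ContinuousWithinAt F (Ici x) x)
    (hsym : ∀ x > (0 : ℝ), x ∉ S → F x + F x⁻¹ = 1) {x y : ℝ} (hx : 0 < x) (hy : 0 < y)
    (hxy : 1 ≤ x * y) : phi x y (F x) (F y) = psi x y (F x) (F y) := by
  have hFxy : F x⁻¹ ≤ F y := hmono (inv_pos.2 hx) hy ((inv_le_iff_one_le_mul₀' hx).2 hxy)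
  exact phi_eq_psi hx hxy (by linarith [one_le_add_inv hmono hrc hsym hx])

lemma ofReal_phi_le_of_mul_lt_one (hmono : MonotoneOn F (Ioi 0))
    (hrc : ∀ x > (0 : ℝ), ContinuousWithinAt F (Ici x) x)
    (hsym : ∀ x > (0 : ℝ), x ∉ S → F x + F x⁻¹ = 1) {B : ℝ≥0∞}
    (hB : ∀ x > (0 : ℝ), ∀ y > (0 : ℝ), 1 ≤ x * y →
      ENNReal.ofReal (psi x y (F x) (F y)) ≤ B)
    {x y : ℝ} (hx : 0 < x) (hy : 0 < y) (hxy : x * y < 1) :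
    ENNReal.ofReal (phi x y (F x) (F y)) ≤ B := by
  have hF : ∀ z > (0 : ℝ), Tendsto F (𝓝[>] z) (𝓝 (F z)) := fun z hz =>
    ((hrc z hz).mono Ioi_subset_Ici_self).tendsto
  set l := 𝓝[>] x ×ˢ 𝓝[>] y
  have hfst : Tendsto Prod.fst l (𝓝[>] x) := tendsto_fst
  have hsnd : Tendsto Prod.snd l (𝓝[>] y) := tendsto_snd
  have hfst' := hfst.mono_right nhdsWithin_le_nhds
  have hsnd' := hsnd.mono_right nhdsWithin_le_nhds
  have hlim : Tendsto (fun p : ℝ × ℝ => ENNReal.ofReal (phi p.1 p.2 (F p.1) (F p.2))) l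
      (𝓝 (ENNReal.ofReal (phi x y (F x) (F y)))) :=
    (ENNReal.continuous_ofReal.tendsto _).comp
      (tendsto_phi hfst' hsnd' ((hF x hx).comp hfst) ((hF y hy).comp hsnd) hx.ne')
  refine le_of_tendsto hlim ?_
  filter_upwards [hfst.eventually self_mem_nhdsWithin, hsnd.eventually self_mem_nhdsWithin,
    hfst.eventually (S.eventually_nhdsGT_notMem x), hsnd.eventually (S.eventually_nhdsGT_notMem y),
    (hfst'.mul hsnd').eventually (gt_mem_nhds hxy)] with ⟨x', y'⟩ hxx' hyy' hx'S hy'S hx'y'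
  have hx' : 0 < x' := hx.trans hxx'
  have hy' : 0 < y' := hy.trans hyy'
  rw [phi_apply_eq_psi_inv hmono hsym hx' hy' hx'y'.le hx'S hy'S]
  refine hB _ (inv_pos.2 hy') _ (inv_pos.2 hx') ?_
  rw [← mul_inv_rev]
  exact one_le_inv₀ (mul_pos hx' hy') |>.2 hx'y'.le

end

theorem stmt12_general (S : Finset ℝ) (F : ℝ → ℝ)
    (hmono : MonotoneOn F (Set.Ioi 0))
    (hrc : ∀ x > (0 : ℝ), ContinuousWithinAt F (Set.Ici x) x)
    (hsym : ∀ x > (0 : ℝ), x ∉ S → F x + F x⁻¹ = 1) :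
    (⨆ x ∈ Set.Ioi (0 : ℝ), ⨆ y ∈ Set.Ioi (0 : ℝ), ENNReal.ofReal
        (1 + y - min 1 (1 - 1 / x + y) * F x - y * F y
          + min (1 + 1 / x) (1 + y) * max 0 (F x + F y - 1)))
      = ⨆ x ∈ Set.Ioi (0 : ℝ), ⨆ y ∈ {y : ℝ | 0 < y ∧ 1 ≤ x * y}, ENNReal.ofReal
          (y - 1 / x + (1 + 1 / x - y) * F y + (1 / x) * F x) := by
  set R := ⨆ x ∈ Ioi (0 : ℝ), ⨆ y ∈ {y : ℝ | 0 < y ∧ 1 ≤ x * y},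
    ENNReal.ofReal (psi x y (F x) (F y))
  change (⨆ x ∈ Ioi (0 : ℝ), ⨆ y ∈ Ioi (0 : ℝ),
    ENNReal.ofReal (phi x y (F x) (F y))) = R
  have hle {x y : ℝ} (hx : 0 < x) (hy : 0 < y) (hxy : 1 ≤ x * y) :
      ENNReal.ofReal (psi x y (F x) (F y)) ≤ R :=
    le_iSup₂_of_le x hx (le_iSup₂_of_le y ⟨hy, hxy⟩ le_rfl)
  refine le_antisymm (iSup₂_le fun x hx => iSup₂_le fun y hy => ?_)
    (iSup₂_le fun x hx => iSup₂_le fun y ⟨hy, hxy⟩ => ?_)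
  · rcases le_or_gt 1 (x * y) with hxy | hxy
    · rw [phi_apply_eq_psi hmono hrc hsym hx hy hxy]
      exact hle hx hy hxy
    · exact ofReal_phi_le_of_mul_lt_one hmono hrc hsym (fun x hx y hy => hle hx hy) hx hy hxy
  · rw [← phi_apply_eq_psi hmono hrc hsym hx hy hxy]
    exact le_iSup₂_of_le x hx (le_iSup₂_of_le y hy le_rfl)

/-- for a finite symmetric breakpoint set `S` (closed under
reciprocals, all positive) and a piecewise CDF `F` with `F(x) + F(1/x) = 1` off
`S`, the supremum of `φ^F` over the positive quadrant equals the supremum over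
the region `xy ≥ 1` of the simplified expression
`y − 1/x + (1 + 1/x − y)F(y) + (1/x)F(x)`. -/
theorem stmt12 (S : Finset ℝ) (hpos : ∀ s ∈ S, (0 : ℝ) < s)
    (hinv : ∀ s ∈ S, s⁻¹ ∈ S) (F : ℝ → ℝ)
    (hrange : ∀ x > (0 : ℝ), F x ∈ Set.Icc (0 : ℝ) 1)
    (hmono : MonotoneOn F (Set.Ioi 0))
    (hrc : ∀ x > (0 : ℝ), ContinuousWithinAt F (Set.Ici x) x)
    (hsym : ∀ x > (0 : ℝ), x ∉ S → F x + F x⁻¹ = 1) :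
    (⨆ x ∈ Set.Ioi (0 : ℝ), ⨆ y ∈ Set.Ioi (0 : ℝ), ENNReal.ofReal
        (1 + y - min 1 (1 - 1 / x + y) * F x - y * F y
          + min (1 + 1 / x) (1 + y) * max 0 (F x + F y - 1)))
      = ⨆ x ∈ Set.Ioi (0 : ℝ), ⨆ y ∈ {y : ℝ | 0 < y ∧ 1 ≤ x * y}, ENNReal.ofReal
          (y - 1 / x + (1 + 1 / x - y) * F y + (1 / x) * F x) :=
  stmt12_general S F hmono hrc hsym
end

section
/- Let P be a distribution on R_{++}^n with R_n(P) = sup_{T ∈ R_{++}^{2×n}} R_n(P,T), and let 𝒯 be the set of time matrices T such that P[z_j = T_{1j}/T_{2j}] = 0 for all j. Then R_n(P) = sup_{T ∈ 𝒯} R_n(P,T). -/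
open MeasureTheory ENNReal
open scoped Classical

/-- Makespan of the threshold algorithm with thresholds `z` on time matrix `T`:
task `j` goes to machine 1 (index 0) iff `T 0 j / T 1 j < z j`. -/
noncomputable def makespan (n : ℕ) (z : Fin n → ℝ) (T : Fin 2 → Fin n → ℝ) : ℝ :=
  max (∑ j : Fin n, if T 0 j / T 1 j < z j then T 0 j else 0)
      (∑ j : Fin n, if T 0 j / T 1 j < z j then 0 else T 1 j)

/-- Optimal makespan over all allocations of tasks to the two machines. -/
noncomputable def optMakespan (n : ℕ) (T : Fin 2 → Fin n → ℝ) : ℝ :=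
  ⨅ X : Fin n → Fin 2, ⨆ i : Fin 2, ∑ j : Fin n, if X j = i then T i j else 0

/-- Expected makespan of the randomized threshold algorithm `A^P`. -/
noncomputable def expMakespan (n : ℕ) (P : Measure (Fin n → ℝ)) (T : Fin 2 → Fin n → ℝ) : ℝ≥0∞ :=
  ∫⁻ z, ENNReal.ofReal (makespan n z T) ∂P

/-- Expected approximation ratio `R_n(P,T)`. -/
noncomputable def ratio (n : ℕ) (P : Measure (Fin n → ℝ)) (T : Fin 2 → Fin n → ℝ) : ℝ≥0∞ :=
  expMakespan n P T / ENNReal.ofReal (optMakespan n T)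

/-- Worst-case expected approximation ratio `R_n(P)`. -/
noncomputable def Rworst (n : ℕ) (P : Measure (Fin n → ℝ)) : ℝ≥0∞ :=
  ⨆ T ∈ {T : Fin 2 → Fin n → ℝ | ∀ i j, 0 < T i j}, ratio n P T


/-!
Replacing the first row of `T` by `T₀ⱼ + ε T₁ⱼ` shifts every ratio `T₀ⱼ / T₁ⱼ` by exactly `ε`.
For a fixed threshold vector `z` the strict comparisons `T₀ⱼ / T₁ⱼ + ε < zⱼ` are eventually
constant as `ε ↓ 0`, so the makespan converges pointwise and, by bounded convergence, so does its
expectation; the optimal makespan is continuous in `T`. Hence `R_n(P, ·)` is right-continuous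
along the perturbation. Each marginal of `P` has only countably many atoms, so all but countably
many `ε` give a tie-free matrix, and such `ε` still accumulate at `0` from the right.
-/

open Filter Topology Set

lemma eventually_add_lt_iff (r z : ℝ) : ∀ᶠ ε in 𝓝[>] 0, (r + ε < z ↔ r < z) := by
  by_cases h : r < z
  · filter_upwards [Ioo_mem_nhdsGT (sub_pos.2 h)] with ε hε
    simp only [h, iff_true]
    linarith [hε.2]
  · filter_upwards [self_mem_nhdsWithin] with ε (hε : 0 < ε)
    exact iff_of_false (fun h' => h (by linarith)) h

lemma neBot_nhdsGT_inf_cocountable (a : ℝ) : (𝓝[>] a ⊓ cocountable).NeBot := by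
  refine inf_neBot_iff.2 fun {p} hp {q} hq => ?_
  obtain ⟨b, hab, hb⟩ := mem_nhdsGT_iff_exists_Ioo_subset.1 hp
  have hdense : Dense q := compl_compl q ▸ (mem_cocountable.1 hq).dense_compl ℝ
  obtain ⟨x, hx, hxq⟩ := hdense.inter_open_nonempty _ isOpen_Ioo (nonempty_Ioo.2 hab)
  exact ⟨x, hb hx, hxq⟩

section ThresholdAlgorithm

variable {n : ℕ}

lemma measurable_makespan (T : Fin 2 → Fin n → ℝ) :
    Measurable fun z : Fin n → ℝ => makespan n z T := by
  apply Measurable.max <;> refine Finset.measurable_sum _ fun j _ => ?_ <;>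
    exact Measurable.ite (measurableSet_lt measurable_const (measurable_pi_apply j))
      measurable_const measurable_const

lemma makespan_le_sum {T : Fin 2 → Fin n → ℝ} (hT : ∀ i j, 0 ≤ T i j) (z : Fin n → ℝ) :
    makespan n z T ≤ ∑ j, (T 0 j + T 1 j) := by
  rw [Finset.sum_add_distrib]
  refine max_le ?_ ?_
  · refine le_add_of_le_of_nonneg (Finset.sum_le_sum fun j _ => ?_)
      (Finset.sum_nonneg fun j _ => hT 1 j)
    split_ifs <;> simp [hT]
  · refine le_add_of_nonneg_of_le (Finset.sum_nonneg fun j _ => hT 0 j)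
      (Finset.sum_le_sum fun j _ => ?_)
    split_ifs <;> simp [hT]

lemma optMakespan_eq_inf' (T : Fin 2 → Fin n → ℝ) :
    optMakespan n T = Finset.univ.inf' Finset.univ_nonempty fun X : Fin n → Fin 2 =>
      Finset.univ.sup' Finset.univ_nonempty fun i : Fin 2 =>
        ∑ j : Fin n, if X j = i then T i j else 0 := by
  simp only [optMakespan, Finset.sup'_univ_eq_ciSup, Finset.inf'_univ_eq_ciInf]

lemma continuous_optMakespan : Continuous (optMakespan n) := by
  simp only [funext optMakespan_eq_inf']
  refine Continuous.finset_inf'_apply _ fun X _ => Continuous.finset_sup'_apply _ fun i _ => ?_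
  refine continuous_finsetSum _ fun j _ => ?_
  split_ifs
  · fun_prop
  · fun_prop

lemma optMakespan_pos (hn : 0 < n) {T : Fin 2 → Fin n → ℝ} (hT : ∀ i j, 0 < T i j) :
    0 < optMakespan n T := by
  rw [optMakespan_eq_inf', Finset.lt_inf'_iff]
  intro X _
  let j₀ : Fin n := ⟨0, hn⟩
  refine Finset.lt_sup'_iff _ |>.2 ⟨X j₀, Finset.mem_univ _, ?_⟩
  calc (0 : ℝ) < T (X j₀) j₀ := hT _ _
    _ ≤ _ := by
      simpa using Finset.single_le_sum (f := fun j => if X j = X j₀ then T (X j₀) j else 0)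
        (fun j _ => by split_ifs <;> simp [(hT _ j).le]) (Finset.mem_univ j₀)

def perturb (T : Fin 2 → Fin n → ℝ) (ε : ℝ) : Fin 2 → Fin n → ℝ :=
  Function.update T 0 (T 0 + ε • T 1)

@[simp] lemma perturb_zero (T : Fin 2 → Fin n → ℝ) : perturb T 0 = T := by
  simp [perturb]

lemma continuous_perturb (T : Fin 2 → Fin n → ℝ) : Continuous (perturb T) :=
  continuous_const.update 0 (continuous_const.add (continuous_id.smul continuous_const))

lemma perturb_pos {T : Fin 2 → Fin n → ℝ} (hT : ∀ i j, 0 < T i j) {ε : ℝ} (hε : 0 ≤ ε)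
    (i : Fin 2) (j : Fin n) : 0 < perturb T ε i j := by
  fin_cases i
  · simpa [perturb] using add_pos_of_pos_of_nonneg (hT 0 j) (mul_nonneg hε (hT 1 j).le)
  · simpa [perturb] using hT 1 j

lemma perturb_div {T : Fin 2 → Fin n → ℝ} {j : Fin n} (hT : T 1 j ≠ 0) (ε : ℝ) :
    perturb T ε 0 j / perturb T ε 1 j = T 0 j / T 1 j + ε := by
  simp [perturb, add_div, hT]

lemma tendsto_makespan_perturb {T : Fin 2 → Fin n → ℝ} (hT : ∀ j, T 1 j ≠ 0) (z : Fin n → ℝ) :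
    Tendsto (fun ε => makespan n z (perturb T ε)) (𝓝[>] 0) (𝓝 (makespan n z T)) := by
  have hsame : ∀ᶠ ε in 𝓝[>] 0, ∀ j,
      (perturb T ε 0 j / perturb T ε 1 j < z j ↔ T 0 j / T 1 j < z j) := by
    simpa only [perturb_div (hT _)] using eventually_all.2 fun j => eventually_add_lt_iff _ (z j)
  let fixedMakespan : (Fin 2 → Fin n → ℝ) → ℝ := fun T' =>
    max (∑ j, if T 0 j / T 1 j < z j then T' 0 j else 0)
      (∑ j, if T 0 j / T 1 j < z j then 0 else T' 1 j)
  have hcont : Continuous fixedMakespan := by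
    refine .max (continuous_finsetSum _ fun j _ => ?_) (continuous_finsetSum _ fun j _ => ?_) <;>
      split_ifs <;> fun_prop
  have hlim := ((hcont.comp (continuous_perturb T)).tendsto 0).mono_left
    (nhdsWithin_le_nhds (s := Ioi 0))
  rw [Function.comp_apply, perturb_zero] at hlim
  exact hlim.congr' (hsame.mono fun ε h => by
    simp only [Function.comp_apply, makespan, fixedMakespan, h])

lemma tendsto_expMakespan_perturb (P : Measure (Fin n → ℝ)) [IsFiniteMeasure P]
    {T : Fin 2 → Fin n → ℝ} (hT : ∀ i j, 0 < T i j) :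
    Tendsto (fun ε => expMakespan n P (perturb T ε)) (𝓝[>] 0) (𝓝 (expMakespan n P T)) := by
  have hbound : ∀ᶠ ε in 𝓝[>] 0, ∀ᵐ z ∂P,
      ENNReal.ofReal (makespan n z (perturb T ε)) ≤ ENNReal.ofReal (∑ j, (T 0 j + 2 * T 1 j)) := by
    filter_upwards [Ioo_mem_nhdsGT one_pos] with ε hε
    refine ae_of_all _ fun z => ENNReal.ofReal_le_ofReal ?_
    refine (makespan_le_sum (fun i j => (perturb_pos hT hε.1.le i j).le) z).trans
      (Finset.sum_le_sum fun j _ => ?_)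
    have := mul_le_of_le_one_left (hT 1 j).le hε.2.le
    simp only [perturb, Function.update_self, Pi.add_apply, Pi.smul_apply, smul_eq_mul,
      Function.update_of_ne one_ne_zero]
    linarith
  refine tendsto_lintegral_filter_of_dominated_convergence _
    (.of_forall fun ε => (measurable_makespan _).ennreal_ofReal) hbound
    (by simpa using ENNReal.mul_ne_top ENNReal.ofReal_ne_top (measure_ne_top P univ))
    (ae_of_all _ fun z => ?_)
  exact (ENNReal.continuous_ofReal.tendsto _).comp
    (tendsto_makespan_perturb (fun j => (hT 1 j).ne') z)

lemma tendsto_ratio_perturb (hn : 0 < n) (P : Measure (Fin n → ℝ)) [IsFiniteMeasure P]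
    {T : Fin 2 → Fin n → ℝ} (hT : ∀ i j, 0 < T i j) :
    Tendsto (fun ε => ratio n P (perturb T ε)) (𝓝[>] 0) (𝓝 (ratio n P T)) := by
  have hopt : Tendsto (fun ε => ENNReal.ofReal (optMakespan n (perturb T ε))) (𝓝[>] 0)
      (𝓝 (ENNReal.ofReal (optMakespan n T))) := by
    have := (ENNReal.continuous_ofReal.comp (continuous_optMakespan.comp (continuous_perturb T)))
    simpa [Function.comp_def] using (this.tendsto 0).mono_left nhdsWithin_le_nhds
  exact ENNReal.Tendsto.div (tendsto_expMakespan_perturb P hT)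
    (.inr (ENNReal.ofReal_pos.2 (optMakespan_pos hn hT)).ne') hopt (.inl ENNReal.ofReal_ne_top)

lemma eventually_cocountable_measure_perturb_tie_eq_zero (P : Measure (Fin n → ℝ)) [SFinite P]
    {T : Fin 2 → Fin n → ℝ} (hT : ∀ j, T 1 j ≠ 0) :
    ∀ᶠ ε in cocountable, ∀ j, P {z | z j = perturb T ε 0 j / perturb T ε 1 j} = 0 := by
  have hatoms : ∀ j : Fin n, {t : ℝ | 0 < P {z | z j = t}}.Countable := fun j =>
    Measure.countable_meas_level_set_pos (measurable_pi_apply j)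
  refine mem_cocountable.2 <| (countable_iUnion fun j =>
    (hatoms j).preimage (add_right_injective (T 0 j / T 1 j))).mono fun ε hε => ?_
  simp only [perturb_div (hT _), mem_compl_iff, mem_ofPred, not_forall, ← pos_iff_ne_zero] at hε
  simpa using hε

end ThresholdAlgorithm

theorem stmt19_general {n : ℕ} (P : Measure (Fin n → ℝ)) [IsProbabilityMeasure P] :
    Rworst n P = ⨆ T ∈ {T : Fin 2 → Fin n → ℝ |
        (∀ i j, 0 < T i j) ∧ ∀ j, P {z : Fin n → ℝ | z j = T 0 j / T 1 j} = 0},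
      ratio n P T := by
  refine le_antisymm (iSup₂_le fun T (hT : ∀ i j, 0 < T i j) => ?_) (biSup_mono fun T hT => hT.1)
  rcases n.eq_zero_or_pos with rfl | hn
  · exact le_iSup₂_of_le T ⟨hT, fun j => j.elim0⟩ le_rfl
  have := neBot_nhdsGT_inf_cocountable 0
  refine le_of_tendsto
    ((tendsto_ratio_perturb hn P hT).mono_left (inf_le_left (b := cocountable))) ?_
  filter_upwards [inf_le_left (b := cocountable) self_mem_nhdsWithin,
    inf_le_right (a := 𝓝[>] (0 : ℝ))
      (eventually_cocountable_measure_perturb_tie_eq_zero P fun j => (hT 1 j).ne')]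
    with ε (hε : 0 < ε) hties
  exact le_iSup₂_of_le (perturb T ε) ⟨perturb_pos hT hε.le, hties⟩ le_rfl

/-- the worst-case expected approximation ratio `R_n(P)` is
attained as a supremum over only the time matrices on which `P` puts no mass on
ties. -/
theorem stmt19 {n : ℕ} (P : Measure (Fin n → ℝ)) [IsProbabilityMeasure P]
    (hsupp : P {z : Fin n → ℝ | ¬ ∀ j, 0 < z j} = 0) :
    Rworst n P = ⨆ T ∈ {T : Fin 2 → Fin n → ℝ |
        (∀ i j, 0 < T i j) ∧ ∀ j, P {z : Fin n → ℝ | z j = T 0 j / T 1 j} = 0},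
      ratio n P T :=
  stmt19_general P
end
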